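/- Let z ∈ ℂ \ (−∞,0] and set a(z) = √(z+√z) − √z and b(z) = √(z+√z) + √z with principal square roots. Then for every positive integer n the Apéry polynomial admits the integral representation B_n(z) = (2π)^{-3} ∫_{[−π,π]³} {((1 + b(z)e^{i t₃})(1 + b(z)e^{−i(t₁+t₃)})) / ((1 − a(z)e^{i t₂})(1 − a(z)e^{i(t₁−t₂)}))}^n · ((1 − a(z)e^{i t₂})(1 − a(z)e^{i(t₁−t₂)}))^{-1} d(t₁,t₂,t₃). -/

import Mathlib

/-!
Put `s = √z` and `u = √(z + √z)`, so that `a = u - s`, `b = u + s` and `a b = u² - s² = s`.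
Both roots lie in the right half-plane, and `(u - s)(u + s) = s` with `‖s‖ < ‖u + s‖` gives
`‖a‖ < 1`. Hence on the torus the integrand is an absolutely convergent product of the series
`(1 + w)ⁿ = ∑ C(n,k) wᵏ` and `(1 - w)^{-(n+1)} = ∑ C(p+n,n) wᵖ` in the variables
`a e^{it₂}, a e^{i(t₁-t₂)}, b e^{it₃}, b e^{-i(t₁+t₃)}`. Integrating a product
`f(x e^{it}) g(y e^{i(s-t)})` over `t` keeps only the diagonal terms, producing
`2π ∑ αⱼ βⱼ (x y e^{is})ʲ`. Applying this to `t₃`, then `t₂`, then `t₁` leaves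
`(2π)³ ∑ C(n,k)² C(n+k,k)² (a b)^{2k}`, and `(a b)² = z`.
-/

open Complex MeasureTheory Finset

theorem integral_exp_int_mul_I (m : ℤ) :
    ∫ t in Set.Icc (-Real.pi) Real.pi, exp (m * I * t) =
      if m = 0 then 2 * (Real.pi : ℂ) else 0 := by
  rw [integral_Icc_eq_integral_Ioc, ← intervalIntegral.integral_of_le (by linarith [Real.pi_pos])]
  split_ifs with hm
  · simp [hm]; ring
  · have hperiod : exp (m * I * Real.pi) = exp (m * I * ↑(-Real.pi)) :=
      exp_eq_exp_iff_exists_int.mpr ⟨m, by push_cast; ring⟩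
    rw [integral_exp_mul_complex (by simpa using hm), hperiod, sub_self, zero_div]

theorem norm_mul_exp_I_mul (w : ℂ) (r : ℝ) : ‖w * exp (I * r)‖ = ‖w‖ := by
  simp [norm_exp]

theorem integral_tsum_mul_exp_int_mul_I {ι : Type*} [Countable ι] {c : ι → ℂ} (hc : Summable c)
    (ω : ι → ℤ) :
    ∫ t in Set.Icc (-Real.pi) Real.pi, ∑' i, c i * exp (ω i * I * t) =
      2 * Real.pi * ∑' i, if ω i = 0 then c i else 0 := by
  have hnorm : ∀ i (t : ℝ), ‖c i * exp (ω i * I * t)‖ = ‖c i‖ := fun i t => by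
    rw [norm_mul, norm_exp]; simp
  have hvol : volume.real (Set.Icc (-Real.pi) Real.pi) = 2 * Real.pi := by
    rw [Real.volume_real_Icc, max_eq_left (by linarith [Real.pi_pos])]; ring
  rw [← integral_tsum_of_summable_integral_norm
    (fun i => Continuous.integrableOn_Icc (by fun_prop))]
  · rw [← tsum_mul_left]
    refine tsum_congr fun i => ?_
    rw [integral_const_mul, integral_exp_int_mul_I]
    split_ifs <;> ring
  · simp_rw [hnorm, setIntegral_const, hvol, smul_eq_mul]
    exact (summable_norm_iff.mpr hc).mul_left _

theorem tsum_ite_sub_eq_zero_eq_tsum_diag (f : ℕ × ℕ → ℂ) :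
    ∑' p : ℕ × ℕ, (if (p.1 : ℤ) - p.2 = 0 then f p else 0) = ∑' j, f (j, j) := by
  have hdiag : Function.Injective fun j : ℕ => (j, j) := fun _ _ h => congrArg Prod.fst h
  rw [← hdiag.tsum_eq]
  · simp
  · rintro ⟨j, k⟩ h
    simp only [Function.mem_support, ne_eq, ite_eq_right_iff, Classical.not_imp, sub_eq_zero,
      Nat.cast_inj] at h
    exact ⟨j, by rw [h.1]⟩

theorem integral_tsum_mul_tsum_exp {α β : ℕ → ℂ} {x y : ℂ}
    (hα : Summable fun j => ‖α j * x ^ j‖) (hβ : Summable fun k => ‖β k * y ^ k‖) (s : ℝ) :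
    ∫ t in Set.Icc (-Real.pi) Real.pi,
        (∑' j, α j * (x * exp (I * t)) ^ j) * ∑' k, β k * (y * exp (I * (s - t))) ^ k =
      2 * Real.pi * ∑' j, α j * β j * (x * y * exp (I * s)) ^ j := by
  set c : ℕ × ℕ → ℂ := fun p => α p.1 * x ^ p.1 * (β p.2 * (y * exp (I * s)) ^ p.2)
  have hc : Summable c := by
    refine Summable.of_norm ((hα.mul_of_nonneg hβ (fun _ => norm_nonneg _)
      (fun _ => norm_nonneg _)).congr fun p => ?_)
    simp [c, norm_exp, mul_pow]
  have hexpand : ∀ t : ℝ,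
      (∑' j, α j * (x * exp (I * t)) ^ j) * ∑' k, β k * (y * exp (I * (s - t))) ^ k =
        ∑' p : ℕ × ℕ, c p * exp (((p.1 : ℤ) - p.2 : ℤ) * I * t) := by
    intro t
    rw [tsum_mul_tsum_of_summable_norm (by simpa [norm_exp] using hα)
      (by simpa [norm_exp] using hβ)]
    refine tsum_congr fun p => ?_
    have hfreq : exp (p.1 * (I * t)) * exp (p.2 * (I * (s - t))) =
        exp (p.2 * (I * s)) * exp (((p.1 : ℤ) - p.2 : ℤ) * I * t) := by
      rw [← exp_add, ← exp_add]; push_cast; ring_nf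
    simp only [c, mul_pow, ← exp_nat_mul]
    linear_combination α p.1 * x ^ p.1 * β p.2 * y ^ p.2 * hfreq
  simp_rw [hexpand, integral_tsum_mul_exp_int_mul_I hc, tsum_ite_sub_eq_zero_eq_tsum_diag, c]
  exact congrArg _ (tsum_congr fun j => by ring)

theorem hasSum_choose_mul_pow (n : ℕ) (w : ℂ) :
    HasSum (fun k => (n.choose k : ℂ) * w ^ k) ((1 + w) ^ n) := by
  have hfin : (1 + w) ^ n = ∑ k ∈ range (n + 1), (n.choose k : ℂ) * w ^ k := by
    rw [add_comm, add_pow]; exact sum_congr rfl fun k _ => by ring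
  rw [hfin]
  exact hasSum_sum_of_ne_finset_zero fun k hk => by
    simp [Nat.choose_eq_zero_of_lt (by simpa using hk : n < k)]

theorem summable_norm_sq {f : ℕ → ℂ} (hf : Summable fun j => ‖f j‖) :
    Summable fun j => ‖f j ^ 2‖ := by
  have hdiag : Function.Injective fun j : ℕ => (j, j) := fun _ _ h => congrArg Prod.fst h
  exact ((hf.mul_of_nonneg hf (fun _ => norm_nonneg _)
    (fun _ => norm_nonneg _)).comp_injective hdiag).congr fun j => by simp [sq]

theorem integral_one_add_mul_exp_pow (b : ℂ) (n : ℕ) (s : ℝ) :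
    ∫ t in Set.Icc (-Real.pi) Real.pi,
        ((1 + b * exp (I * t)) * (1 + b * exp (I * (s - t)))) ^ n =
      2 * Real.pi * ∑' k, (n.choose k : ℂ) ^ 2 * (b ^ 2 * exp (I * s)) ^ k := by
  have hsum : Summable fun k => ‖(n.choose k : ℂ) * b ^ k‖ :=
    summable_norm_iff.mpr (hasSum_choose_mul_pow n b).summable
  simp_rw [mul_pow, ← (hasSum_choose_mul_pow n _).tsum_eq, integral_tsum_mul_tsum_exp hsum hsum,
    ← sq]
  simp only [mul_pow]

theorem integral_inv_one_sub_mul_exp_pow {a : ℂ} (ha : ‖a‖ < 1) (n : ℕ) (s : ℝ) :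
    ∫ t in Set.Icc (-Real.pi) Real.pi,
        (((1 - a * exp (I * t)) * (1 - a * exp (I * (s - t)))) ^ (n + 1))⁻¹ =
      2 * Real.pi * ∑' p, ((p + n).choose n : ℂ) ^ 2 * (a ^ 2 * exp (I * s)) ^ p := by
  have hnorm : ∀ r : ℝ, ‖a * exp (I * r)‖ < 1 := fun r => (norm_mul_exp_I_mul a r).trans_lt ha
  have hsum : Summable fun p => ‖((p + n).choose n : ℂ) * a ^ p‖ :=
    summable_norm_iff.mpr (summable_choose_mul_geometric_of_norm_lt_one n ha)
  have hexpand : ∀ t : ℝ, (((1 - a * exp (I * t)) * (1 - a * exp (I * (s - t)))) ^ (n + 1))⁻¹ =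
      (∑' p, ((p + n).choose n : ℂ) * (a * exp (I * t)) ^ p) *
        ∑' q, ((q + n).choose n : ℂ) * (a * exp (I * (s - t))) ^ q := by
    intro t
    rw [tsum_choose_mul_geometric_of_norm_lt_one n (hnorm t),
      tsum_choose_mul_geometric_of_norm_lt_one n (by rw [← ofReal_sub]; exact hnorm _),
      mul_pow, mul_inv, one_div, one_div]
  simp_rw [hexpand, integral_tsum_mul_tsum_exp hsum hsum, ← sq]

theorem tsum_choose_sq_mul_choose_sq (n : ℕ) (w : ℂ) :
    ∑' k, ((k + n).choose n : ℂ) ^ 2 * (n.choose k : ℂ) ^ 2 * w ^ k =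
      ∑ k ∈ range (n + 1), (n.choose k : ℂ) ^ 2 * ((n + k).choose k : ℂ) ^ 2 * w ^ k := by
  rw [tsum_eq_sum (s := range (n + 1)) fun k hk => by
    simp [Nat.choose_eq_zero_of_lt (by simpa using hk : n < k)]]
  exact sum_congr rfl fun k _ => by rw [add_comm k n, Nat.choose_symm_add]; ring

theorem integral_tsum_mul_tsum_eq_apery {a : ℂ} (ha : ‖a‖ < 1) (b : ℂ) (n : ℕ) :
    ∫ t in Set.Icc (-Real.pi) Real.pi,
        (∑' k, (n.choose k : ℂ) ^ 2 * (b ^ 2 * exp (I * (-t : ℝ))) ^ k) *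
          ∑' p, ((p + n).choose n : ℂ) ^ 2 * (a ^ 2 * exp (I * t)) ^ p =
      2 * Real.pi * ∑ k ∈ range (n + 1),
        (n.choose k : ℂ) ^ 2 * ((n + k).choose k : ℂ) ^ 2 * (a ^ 2 * b ^ 2) ^ k := by
  have hα : Summable fun p => ‖((p + n).choose n : ℂ) ^ 2 * (a ^ 2) ^ p‖ := by
    simpa [mul_pow, ← pow_mul, mul_comm 2] using summable_norm_sq
      (summable_norm_iff.mpr (summable_choose_mul_geometric_of_norm_lt_one n ha))
  have hβ : Summable fun k => ‖(n.choose k : ℂ) ^ 2 * (b ^ 2) ^ k‖ := by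
    simpa [mul_pow, ← pow_mul, mul_comm 2] using summable_norm_sq
      (summable_norm_iff.mpr (hasSum_choose_mul_pow n b).summable)
  have hneg : ∀ t : ℝ, ((-t : ℝ) : ℂ) = ((0 : ℝ) : ℂ) - t := fun t => by simp
  simp_rw [mul_comm (∑' k, (n.choose k : ℂ) ^ 2 * _), hneg, integral_tsum_mul_tsum_exp hα hβ,
    ofReal_zero, mul_zero, exp_zero, mul_one, tsum_choose_sq_mul_choose_sq]

theorem setIntegral_Icc_prod_prod {E : Type*} [NormedAddCommGroup E] [NormedSpace ℝ E]
    {f : ℝ × ℝ × ℝ → E} (hf : Continuous f) (a₁ a₂ a₃ b₁ b₂ b₃ : ℝ) :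
    ∫ t in Set.Icc (a₁, a₂, a₃) (b₁, b₂, b₃), f t =
      ∫ x in Set.Icc a₁ b₁, ∫ y in Set.Icc a₂ b₂, ∫ z in Set.Icc a₃ b₃, f (x, y, z) := by
  rw [← Set.Icc_prod_Icc, ← Set.Icc_prod_Icc, Measure.volume_eq_prod,
    setIntegral_prod f (hf.continuousOn.integrableOn_compact
      (isCompact_Icc.prod (isCompact_Icc.prod isCompact_Icc)))]
  refine setIntegral_congr_fun measurableSet_Icc fun x _ => ?_
  exact setIntegral_prod _ ((by fun_prop : Continuous fun y : ℝ × ℝ => f (x, y)).continuousOn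
    |>.integrableOn_compact (isCompact_Icc.prod isCompact_Icc))

theorem re_cpow_half_pos {x : ℂ} (hx : x ∈ slitPlane) : 0 < (x ^ (1 / 2 : ℂ)).re := by
  rw [one_div, cpow_inv_two_re, Real.sqrt_pos]
  rcases mem_slitPlane_iff.mp hx with hre | him
  · linarith [norm_nonneg x]
  · linarith [neg_abs_le x.re, abs_re_lt_norm.mpr him]

theorem cpow_half_sq (x : ℂ) : (x ^ (1 / 2 : ℂ)) ^ 2 = x := by
  rw [one_div]; exact cpow_nat_inv_pow x two_ne_zero

theorem sq_add_self_mem_slitPlane {s : ℂ} (hs : 0 < s.re) : s ^ 2 + s ∈ slitPlane := by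
  rw [mem_slitPlane_iff]
  by_cases him : s.im = 0
  · left; simp [sq, him]; positivity
  · right
    have : (s ^ 2 + s).im = s.im * (2 * s.re + 1) := by simp [sq]; ring
    rw [this]
    exact mul_ne_zero him (by positivity)

theorem norm_sub_lt_one_of_sq_eq_sq_add_self {s u : ℂ} (hs : 0 < s.re) (hu : 0 < u.re)
    (h : u ^ 2 = s ^ 2 + s) : ‖u - s‖ < 1 := by
  have him : 2 * u.re * (u.im * s.im) = s.im ^ 2 * (2 * s.re + 1) := by
    have := congrArg im h; simp only [sq, mul_im, add_im] at this; linear_combination s.im * this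
  have hcross : 0 ≤ u.im * s.im :=
    (mul_nonneg_iff_of_pos_left (by positivity : (0 : ℝ) < 2 * u.re)).mp (by rw [him]; positivity)
  have hlt : ‖s‖ < ‖u + s‖ := by
    rw [← sq_lt_sq₀ (norm_nonneg _) (norm_nonneg _), ← normSq_eq_norm_sq, ← normSq_eq_norm_sq]
    simp only [normSq_apply, add_re, add_im]
    nlinarith [mul_pos hu hs, sq_nonneg u.re, sq_nonneg u.im]
  have hprod : ‖u - s‖ * ‖u + s‖ = ‖s‖ := by
    rw [← norm_mul]; congr 1; linear_combination h
  nlinarith [norm_nonneg (u + s)]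

theorem norm_cpow_half_add_cpow_half_sub_lt_one {z : ℂ} (hz : z ∈ slitPlane) :
    ‖(z + z ^ (1 / 2 : ℂ)) ^ (1 / 2 : ℂ) - z ^ (1 / 2 : ℂ)‖ < 1 := by
  have hs := re_cpow_half_pos hz
  have hu := re_cpow_half_pos (x := z + z ^ (1 / 2 : ℂ))
    (by simpa [cpow_half_sq] using sq_add_self_mem_slitPlane hs)
  exact norm_sub_lt_one_of_sq_eq_sq_add_self hs hu (by rw [cpow_half_sq, cpow_half_sq])

theorem mem_slitPlane_of_ne_ofReal {z : ℂ} (hz : ∀ x : ℝ, x ≤ 0 → z ≠ x) : z ∈ slitPlane := by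
  rw [mem_slitPlane_iff]
  by_contra! h
  exact hz z.re h.1 (ext rfl (by simp [h.2]))

theorem one_sub_mul_exp_I_mul_ne_zero {a : ℂ} (ha : ‖a‖ < 1) (r : ℝ) : 1 - a * exp (I * r) ≠ 0 :=
  fun h => by simpa [← sub_eq_zero.mp h] using (norm_mul_exp_I_mul a r).trans_lt ha

theorem div_pow_mul_inv {K : Type*} [Field K] (x y : K) (n : ℕ) :
    (x / y) ^ n * y⁻¹ = x ^ n * (y ^ (n + 1))⁻¹ := by
  rw [div_pow, div_eq_mul_inv, mul_assoc, ← mul_inv_rev, ← pow_succ']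

theorem stmt_10_general (z : ℂ) (hz : ∀ x : ℝ, x ≤ 0 → z ≠ (x : ℂ))
    (a b : ℂ)
    (ha : a = (z + z ^ (1/2 : ℂ)) ^ (1/2 : ℂ) - z ^ (1/2 : ℂ))
    (hb : b = (z + z ^ (1/2 : ℂ)) ^ (1/2 : ℂ) + z ^ (1/2 : ℂ))
    (n : ℕ) :
    ∑ k ∈ Finset.range (n + 1),
        ((n.choose k : ℂ)) ^ 2 * (((n + k).choose k : ℂ)) ^ 2 * z ^ k =
      (2 * (Real.pi : ℂ)) ^ (-3 : ℤ) *
        ∫ t in Set.Icc ((-Real.pi, -Real.pi, -Real.pi) : ℝ × ℝ × ℝ)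
            ((Real.pi, Real.pi, Real.pi) : ℝ × ℝ × ℝ),
          (((1 + b * Complex.exp (Complex.I * t.2.2)) *
              (1 + b * Complex.exp (-(Complex.I * (t.1 + t.2.2))))) /
            ((1 - a * Complex.exp (Complex.I * t.2.1)) *
              (1 - a * Complex.exp (Complex.I * (t.1 - t.2.1))))) ^ n *
          ((1 - a * Complex.exp (Complex.I * t.2.1)) *
            (1 - a * Complex.exp (Complex.I * (t.1 - t.2.1))))⁻¹ := by
  have ha1 : ‖a‖ < 1 :=
    ha ▸ norm_cpow_half_add_cpow_half_sub_lt_one (mem_slitPlane_of_ne_ofReal hz)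
  have hab : a * b = z ^ (1 / 2 : ℂ) := by
    rw [ha, hb]; linear_combination cpow_half_sq (z + z ^ (1 / 2 : ℂ)) - cpow_half_sq z
  have hneg : ∀ x y : ℝ, -(I * (x + y)) = I * ((-x : ℝ) - y) := fun x y => by push_cast; ring
  simp_rw [div_pow_mul_inv, hneg]
  rw [setIntegral_Icc_prod_prod]
  · simp_rw [integral_mul_const, integral_one_add_mul_exp_pow, integral_const_mul,
      integral_inv_one_sub_mul_exp_pow ha1, mul_mul_mul_comm, integral_const_mul,
      integral_tsum_mul_tsum_eq_apery ha1, ← mul_pow a b, hab, cpow_half_sq]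
    field_simp
  · refine (by fun_prop : Continuous _).mul ((by fun_prop : Continuous _).inv₀ fun t => ?_)
    refine pow_ne_zero _ (mul_ne_zero (one_sub_mul_exp_I_mul_ne_zero ha1 _) ?_)
    simpa using one_sub_mul_exp_I_mul_ne_zero ha1 (t.1 - t.2.1)

/-- Multivariate integral representation of the Apéry polynomials: for
`z ∈ ℂ \ (−∞,0]`, `a(z) = √(z+√z) − √z`, `b(z) = √(z+√z) + √z` (principal branches) and
every `n ≥ 1`,
`B_n(z) = (2π)^{-3} ∫_{[−π,π]³} {((1+b e^{it₃})(1+b e^{−i(t₁+t₃)}))/((1−a e^{it₂})(1−a e^{i(t₁−t₂)}))}^n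
  · ((1−a e^{it₂})(1−a e^{i(t₁−t₂)}))^{-1} d(t₁,t₂,t₃)`. -/
theorem stmt_10 (z : ℂ) (hz : ∀ x : ℝ, x ≤ 0 → z ≠ (x : ℂ))
    (a b : ℂ)
    (ha : a = (z + z ^ (1/2 : ℂ)) ^ (1/2 : ℂ) - z ^ (1/2 : ℂ))
    (hb : b = (z + z ^ (1/2 : ℂ)) ^ (1/2 : ℂ) + z ^ (1/2 : ℂ))
    (n : ℕ) (hn : 1 ≤ n) :
    ∑ k ∈ Finset.range (n + 1),
        ((n.choose k : ℂ)) ^ 2 * (((n + k).choose k : ℂ)) ^ 2 * z ^ k =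
      (2 * (Real.pi : ℂ)) ^ (-3 : ℤ) *
        ∫ t in Set.Icc ((-Real.pi, -Real.pi, -Real.pi) : ℝ × ℝ × ℝ)
            ((Real.pi, Real.pi, Real.pi) : ℝ × ℝ × ℝ),
          (((1 + b * Complex.exp (Complex.I * t.2.2)) *
              (1 + b * Complex.exp (-(Complex.I * (t.1 + t.2.2))))) /
            ((1 - a * Complex.exp (Complex.I * t.2.1)) *
              (1 - a * Complex.exp (Complex.I * (t.1 - t.2.1))))) ^ n *
          ((1 - a * Complex.exp (Complex.I * t.2.1)) *
            (1 - a * Complex.exp (Complex.I * (t.1 - t.2.1))))⁻¹ :=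
  stmt_10_general z hz a b ha hb n
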